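/- arXiv:1503.02736 — 3 statements merged into one kernel-verified Lean document; each statement's English description precedes it below -/
import Mathlib

section
/- Let α, k, h₀, γ, ε, D∞ be real parameters with α > 0, k > 0, h₀ > 0, γ > 0, 0 < ε < 1, D∞ > 0. Define F(x) = exp(-x²) / (k/(h₀√(πα)) + erf(x)) and G(x) = x + (γ(1-ε)√π/(2D∞)) · (1/F(x)) for x > 0. Then G(x) → (1-ε)γk/(2D∞h₀√α) as x → 0⁺, G(x) → +∞ as x → +∞, and G is strictly increasing on (0, ∞) (G'(x) > 0 for all x > 0). -/
open Real Filter Set Topology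

noncomputable def erf (x : ℝ) : ℝ := (2 / Real.sqrt π) * ∫ t in (0:ℝ)..x, Real.exp (-t ^ 2)

/-!
Writing `A = k / (h₀ √(πα))` and `C = γ (1 - ε) √π / (2 D∞)`, one has `1 / F = H` with
`H x = (A + erf x) exp (x²)`, so `G x = x + C H x` is differentiable on all of `ℝ`. The function `H`
solves `H' = 2 / √π + 2 x H`, hence `H ≥ 0` and `H' > 0` for `x ≥ 0`. This gives `G' > 1`
and `G x ≥ x` on `(0, ∞)`, and the limit at `0⁺` is `G 0 = C A`.
-/

theorem hasDerivAt_erf (x : ℝ) : HasDerivAt erf (2 / √π * exp (-x ^ 2)) x := by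
  have hcont : Continuous fun t : ℝ => exp (-t ^ 2) := by fun_prop
  exact (intervalIntegral.integral_hasDerivAt_right (hcont.intervalIntegrable 0 x)
    (hcont.stronglyMeasurableAtFilter _ _) hcont.continuousAt).const_mul (2 / √π)

theorem erf_zero : erf 0 = 0 := by
  simp [erf]

theorem erf_nonneg {x : ℝ} (hx : 0 ≤ x) : 0 ≤ erf x :=
  mul_nonneg (by positivity) (intervalIntegral.integral_nonneg hx fun t _ => (exp_pos _).le)

noncomputable def erfExpSq (A x : ℝ) : ℝ := (A + erf x) * exp (x ^ 2)

namespace erfExpSq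

variable {A : ℝ}

theorem one_div_exp_neg_sq_div (A x : ℝ) :
    1 / (exp (-x ^ 2) / (A + erf x)) = erfExpSq A x := by
  rw [one_div_div, exp_neg, div_inv_eq_mul, erfExpSq]

theorem apply_zero (A : ℝ) : erfExpSq A 0 = A := by
  simp [erfExpSq, erf_zero]

theorem nonneg (hA : 0 ≤ A) {x : ℝ} (hx : 0 ≤ x) : 0 ≤ erfExpSq A x :=
  mul_nonneg (add_nonneg hA (erf_nonneg hx)) (exp_pos _).le

theorem hasDerivAt (A x : ℝ) :
    HasDerivAt (erfExpSq A) (2 / √π + 2 * x * erfExpSq A x) x := by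
  have hexp : HasDerivAt (fun y : ℝ => exp (y ^ 2)) (exp (x ^ 2) * (2 * x)) x := by
    simpa using (hasDerivAt_pow 2 x).exp
  refine (((hasDerivAt_erf x).const_add A).mul hexp).congr_deriv ?_
  rw [erfExpSq, mul_assoc, ← exp_add, neg_add_cancel, exp_zero]
  ring

end erfExpSq

section

variable {A C : ℝ}

theorem hasDerivAt_id_add_mul_erfExpSq (A C x : ℝ) :
    HasDerivAt (fun y => y + C * erfExpSq A y) (1 + C * (2 / √π + 2 * x * erfExpSq A x)) x :=
  (hasDerivAt_id x).add ((erfExpSq.hasDerivAt A x).const_mul C)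

theorem one_add_mul_deriv_erfExpSq_pos (hA : 0 ≤ A) (hC : 0 ≤ C) {x : ℝ} (hx : 0 ≤ x) :
    0 < 1 + C * (2 / √π + 2 * x * erfExpSq A x) := by
  have := erfExpSq.nonneg hA hx
  positivity

theorem strictMonoOn_id_add_mul_erfExpSq (hA : 0 ≤ A) (hC : 0 ≤ C) :
    StrictMonoOn (fun y => y + C * erfExpSq A y) (Ioi 0) := by
  refine strictMonoOn_of_deriv_pos (convex_Ioi 0)
    (fun x _ => (hasDerivAt_id_add_mul_erfExpSq A C x).continuousAt.continuousWithinAt)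
    fun x hx => ?_
  rw [interior_Ioi] at hx
  rw [(hasDerivAt_id_add_mul_erfExpSq A C x).deriv]
  exact one_add_mul_deriv_erfExpSq_pos hA hC hx.le

theorem tendsto_id_add_mul_erfExpSq_atTop (hA : 0 ≤ A) (hC : 0 ≤ C) :
    Tendsto (fun y => y + C * erfExpSq A y) atTop atTop := by
  refine tendsto_atTop_mono' atTop ?_ tendsto_id
  filter_upwards [eventually_ge_atTop 0] with x hx
  exact le_add_of_nonneg_right (mul_nonneg hC (erfExpSq.nonneg hA hx))

end

theorem stmt_1_general (α k h₀ γ ε Dinf : ℝ) (hk : 0 < k) (hh : 0 < h₀)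
    (hγ : 0 < γ) (hε1 : ε < 1) (hD : 0 < Dinf)
    (F G : ℝ → ℝ)
    (hF : ∀ x, F x = Real.exp (-x ^ 2) / (k / (h₀ * Real.sqrt (π * α)) + erf x))
    (hG : ∀ x, G x = x + (γ * (1 - ε) * Real.sqrt π / (2 * Dinf)) * (1 / F x)) :
    Tendsto G (nhdsWithin 0 (Ioi 0)) (nhds ((1 - ε) * γ * k / (2 * Dinf * h₀ * Real.sqrt α))) ∧
    Tendsto G atTop atTop ∧
    StrictMonoOn G (Ioi 0) ∧
    ∀ x > (0:ℝ), deriv G x > 0 := by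
  set A := k / (h₀ * √(π * α)) with hA_def
  set C := γ * (1 - ε) * √π / (2 * Dinf) with hC_def
  have hA : 0 ≤ A := by positivity
  have hC : 0 ≤ C := by
    have : 0 ≤ 1 - ε := by linarith
    positivity
  have hG_eq : G = fun y => y + C * erfExpSq A y := by
    funext x
    rw [hG, hF, erfExpSq.one_div_exp_neg_sq_div]
  have hG_zero : G 0 = (1 - ε) * γ * k / (2 * Dinf * h₀ * √α) := by
    have hπ : √π ≠ 0 := by positivity
    rw [hG_eq]
    dsimp only
    rw [erfExpSq.apply_zero, zero_add, hA_def, hC_def, sqrt_mul pi_pos.le, div_mul_div_comm,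
      show γ * (1 - ε) * √π * k = √π * ((1 - ε) * γ * k) by ring,
      show 2 * Dinf * (h₀ * (√π * √α)) = √π * (2 * Dinf * h₀ * √α) by ring,
      mul_div_mul_left _ _ hπ]
  refine ⟨?_, ?_, ?_, fun x hx => ?_⟩
  · rw [← hG_zero, hG_eq]
    exact (hasDerivAt_id_add_mul_erfExpSq A C 0).continuousAt.continuousWithinAt
  · exact hG_eq ▸ tendsto_id_add_mul_erfExpSq_atTop hA hC
  · exact hG_eq ▸ strictMonoOn_id_add_mul_erfExpSq hA hC
  · rw [hG_eq, (hasDerivAt_id_add_mul_erfExpSq A C x).deriv]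
    exact one_add_mul_deriv_erfExpSq_pos hA hC hx.le

/-- Properties of the function `G` from the convective mushy-zone Stefan problem:
`G(x) → (1-ε)γk/(2 D∞ h₀ √α)` as `x → 0⁺`, `G(x) → +∞` as `x → +∞`, and `G` is strictly
increasing on `(0,∞)` with `G'(x) > 0` for all `x > 0`. -/
theorem stmt_1 (α k h₀ γ ε Dinf : ℝ) (hα : 0 < α) (hk : 0 < k) (hh : 0 < h₀)
    (hγ : 0 < γ) (hε0 : 0 < ε) (hε1 : ε < 1) (hD : 0 < Dinf)
    (F G : ℝ → ℝ)
    (hF : ∀ x, F x = Real.exp (-x ^ 2) / (k / (h₀ * Real.sqrt (π * α)) + erf x))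
    (hG : ∀ x, G x = x + (γ * (1 - ε) * Real.sqrt π / (2 * Dinf)) * (1 / F x)) :
    Tendsto G (nhdsWithin 0 (Ioi 0)) (nhds ((1 - ε) * γ * k / (2 * Dinf * h₀ * Real.sqrt α))) ∧
    Tendsto G atTop atTop ∧
    StrictMonoOn G (Ioi 0) ∧
    ∀ x > (0:ℝ), deriv G x > 0 :=
  stmt_1_general α k h₀ γ ε Dinf hk hh hγ hε1 hD F G hF hG
end

section
/- Let α, k, h₀, D∞, γ be positive reals and ξ > 0. Define T(x,t) = -(h₀D∞√(πα)/k) · erf(ξ)/(1 + (h₀√(πα)/k)·erf(ξ)) · [1 - erf(x/(2√(αt)))/erf(ξ)], s(t) = 2ξ√(αt), μ = ξ + (γk/(2D∞h₀√α)) · exp(ξ²) · [1 + (h₀√(πα)/k)·erf(ξ)], and r(t) = 2μ√(αt). Then for all t > 0, T_x(s(t), t) · (r(t) - s(t)) = γ. -/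
open Real Filter Set Topology

theorem erf_pos {x : ℝ} (hx : 0 < x) : 0 < erf x := by
  have hint : 0 < ∫ t in (0:ℝ)..x, exp (-t ^ 2) :=
    intervalIntegral.intervalIntegral_pos_of_pos_on
      ((by fun_prop : Continuous fun t : ℝ => exp (-t ^ 2)).intervalIntegrable 0 x)
      (fun t _ => exp_pos _) hx
  unfold erf
  positivity

theorem hasDerivAt_const_mul_one_sub_erf_div (A E L x : ℝ) :
    HasDerivAt (fun y => A * (1 - erf (y / L) / E))
      (-(A * (2 / √π) * exp (-(x / L) ^ 2) / (L * E))) x := by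
  have hinner : HasDerivAt (fun y : ℝ => y / L) (1 / L) x := by
    simpa using (hasDerivAt_id x).div_const L
  have hcomp := (((hasDerivAt_erf (x / L)).comp x hinner).div_const E).const_sub 1
  exact (hcomp.const_mul A).congr_deriv (by ring)

theorem stmt_4_general (α k h₀ Dinf γ ξ μ : ℝ) (hα : 0 < α) (hk : 0 < k) (hh : 0 < h₀)
    (hD : 0 < Dinf) (hξ : 0 < ξ)
    (T : ℝ → ℝ → ℝ) (s r : ℝ → ℝ)
    (hT : ∀ x t, T x t =
      -(h₀ * Dinf * Real.sqrt (π * α) / k) *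
        (erf ξ / (1 + (h₀ * Real.sqrt (π * α) / k) * erf ξ)) *
        (1 - erf (x / (2 * Real.sqrt (α * t))) / erf ξ))
    (hs : ∀ t, s t = 2 * ξ * Real.sqrt (α * t))
    (hμ : μ = ξ + (γ * k / (2 * Dinf * h₀ * Real.sqrt α)) * Real.exp (ξ ^ 2) *
      (1 + (h₀ * Real.sqrt (π * α) / k) * erf ξ))
    (hr : ∀ t, r t = 2 * μ * Real.sqrt (α * t)) :
    ∀ t > (0:ℝ), deriv (fun y => T y t) (s t) * (r t - s t) = γ := by
  intro t ht
  have hq : 0 < √(α * t) := sqrt_pos.mpr (mul_pos hα ht)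
  have hsimilarity : s t / (2 * √(α * t)) = ξ := by
    rw [hs]
    field_simp
  have hderiv := hasDerivAt_const_mul_one_sub_erf_div
    (-(h₀ * Dinf * √(π * α) / k) * (erf ξ / (1 + (h₀ * √(π * α) / k) * erf ξ)))
    (erf ξ) (2 * √(α * t)) (s t)
  rw [hsimilarity] at hderiv
  have hE : 0 < erf ξ := erf_pos hξ
  have hB : 0 < 1 + h₀ * √(π * α) / k * erf ξ := by positivity
  have hexp : exp (-ξ ^ 2) * exp (ξ ^ 2) = 1 := by rw [← exp_add, neg_add_cancel, exp_zero]
  have hsqrt_πα : √(π * α) = √π * √α := sqrt_mul pi_pos.le α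
  have hsqrt_π : 0 < √π := sqrt_pos.mpr pi_pos
  have hsqrt_α : 0 < √α := sqrt_pos.mpr hα
  rw [show (fun y => T y t) = _ from funext fun y => hT y t, hderiv.deriv, hr, hs, hμ, hsqrt_πα]
  field_simp
  linear_combination (k + h₀ * √π * √α * erf ξ) * γ * hexp

/-- For the explicit solution with convective boundary condition, the mushy-zone width
condition `T_x(s(t),t) · (r(t) - s(t)) = γ` holds for all `t > 0`. -/
theorem stmt_4 (α k h₀ Dinf γ ξ μ : ℝ) (hα : 0 < α) (hk : 0 < k) (hh : 0 < h₀)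
    (hD : 0 < Dinf) (hγ : 0 < γ) (hξ : 0 < ξ)
    (T : ℝ → ℝ → ℝ) (s r : ℝ → ℝ)
    (hT : ∀ x t, T x t =
      -(h₀ * Dinf * Real.sqrt (π * α) / k) *
        (erf ξ / (1 + (h₀ * Real.sqrt (π * α) / k) * erf ξ)) *
        (1 - erf (x / (2 * Real.sqrt (α * t))) / erf ξ))
    (hs : ∀ t, s t = 2 * ξ * Real.sqrt (α * t))
    (hμ : μ = ξ + (γ * k / (2 * Dinf * h₀ * Real.sqrt α)) * Real.exp (ξ ^ 2) *
      (1 + (h₀ * Real.sqrt (π * α) / k) * erf ξ))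
    (hr : ∀ t, r t = 2 * μ * Real.sqrt (α * t)) :
    ∀ t > (0:ℝ), deriv (fun y => T y t) (s t) * (r t - s t) = γ :=
  stmt_4_general α k h₀ Dinf γ ξ μ hα hk hh hD hξ T s r hT hs hμ hr
end

section
/- Let ρ, c, k, ℓ, γ, q₀ be positive reals, α = k/(ρc), and 0 < ε < 1. Define G₃(x) = [x + (γ(1-ε)k/(2q₀√α))·exp(x²)]·exp(x²) for x > 0. Then the equation G₃(x) = q₀/(ρℓ√α) has a (unique) solution x = ω > 0 if and only if q₀ > √(γ(1-ε)ρℓk/2); moreover, when this inequality holds the positive solution ω is unique. -/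
open Real Filter Set Topology

/-! `G₃` is `x ↦ (x + A e^{x²}) e^{x²}` with `A = γ(1-ε)k/(2q₀√α) ≥ 0`, which is strictly increasing
on `[0, ∞)`, takes the value `A` at `0` and exceeds `x` at every `x ≥ 0`. So by the intermediate
value theorem it attains a value `T` at a positive point iff `A < T`, and then at only one.
With `T = q₀/(ρℓ√α)`, clearing denominators turns `A < T` into `γ(1-ε)ρℓk/2 < q₀²`. -/

section

variable {A : ℝ}

lemma strictMonoOn_add_mul_exp_sq_mul_exp_sq (hA : 0 ≤ A) :
    StrictMonoOn (fun x => (x + A * exp (x ^ 2)) * exp (x ^ 2)) (Ici 0) := by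
  intro x hx y hy hxy
  have hexp : exp (x ^ 2) < exp (y ^ 2) := exp_lt_exp.2 (pow_lt_pow_left₀ hxy hx two_ne_zero)
  have hfirst : x + A * exp (x ^ 2) ≤ y + A * exp (y ^ 2) := by
    nlinarith [mul_le_mul_of_nonneg_left hexp.le hA]
  have hy_pos : 0 < y + A * exp (y ^ 2) :=
    add_pos_of_pos_of_nonneg (lt_of_le_of_lt hx hxy) (by positivity)
  exact mul_lt_mul' hfirst hexp (exp_pos _).le hy_pos

lemma exists_pos_add_mul_exp_sq_mul_exp_sq_eq_iff (hA : 0 ≤ A) (T : ℝ) :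
    (∃ x > 0, (x + A * exp (x ^ 2)) * exp (x ^ 2) = T) ↔ A < T := by
  set f : ℝ → ℝ := fun x => (x + A * exp (x ^ 2)) * exp (x ^ 2)
  have hf0 : f 0 = A := by simp [f]
  constructor
  · rintro ⟨x, hx, rfl⟩
    simpa using strictMonoOn_add_mul_exp_sq_mul_exp_sq hA self_mem_Ici hx.le hx
  · intro hAT
    have hT : 0 < T := hA.trans_lt hAT
    have hfT : T ≤ f T := by
      nlinarith [one_le_exp (sq_nonneg T), mul_nonneg hA (exp_pos (T ^ 2)).le, exp_pos (T ^ 2)]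
    obtain ⟨x, hx, hfx⟩ :=
      intermediate_value_Icc hT.le (by fun_prop) (⟨hf0 ▸ hAT.le, hfT⟩ : T ∈ Icc (f 0) (f T))
    refine ⟨x, hx.1.lt_of_ne ?_, hfx⟩
    rintro rfl
    exact hAT.ne (hf0 ▸ hfx)

end

lemma sqrt_mul_div_two_lt_iff {a b q s : ℝ} (hb : 0 < b) (hq : 0 < q) (hs : 0 < s) :
    sqrt (a * b / 2) < q ↔ a / (2 * q * s) < q / (b * s) := by
  rw [sqrt_lt' hq, div_lt_div_iff₀ (by positivity) (by positivity)]
  constructor <;> intro h <;> nlinarith [mul_pos hq hs]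

theorem stmt_16_general (ρ c k ℓ γ q₀ α ε : ℝ)
    (hρ : 0 < ρ) (hc : 0 < c) (hk : 0 < k) (hℓ : 0 < ℓ) (hγ : 0 < γ) (hq : 0 < q₀)
    (hα : α = k / (ρ * c)) (hε1 : ε < 1)
    (G₃ : ℝ → ℝ)
    (hG₃ : ∀ x, G₃ x = (x + (γ * (1 - ε) * k / (2 * q₀ * Real.sqrt α)) *
      Real.exp (x ^ 2)) * Real.exp (x ^ 2)) :
    ((∃ ω > (0:ℝ), G₃ ω = q₀ / (ρ * ℓ * Real.sqrt α)) ↔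
      q₀ > Real.sqrt (γ * (1 - ε) * ρ * ℓ * k / 2)) ∧
    (q₀ > Real.sqrt (γ * (1 - ε) * ρ * ℓ * k / 2) →
      ∃! ω : ℝ, ω > 0 ∧ G₃ ω = q₀ / (ρ * ℓ * Real.sqrt α)) := by
  have hsα : 0 < sqrt α := sqrt_pos.2 (by rw [hα]; positivity)
  have hA : 0 ≤ γ * (1 - ε) * k / (2 * q₀ * sqrt α) := by
    have : 0 < 1 - ε := by linarith
    positivity
  have hcrit : q₀ > sqrt (γ * (1 - ε) * ρ * ℓ * k / 2) ↔
      γ * (1 - ε) * k / (2 * q₀ * sqrt α) < q₀ / (ρ * ℓ * sqrt α) := by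
    rw [gt_iff_lt, show γ * (1 - ε) * ρ * ℓ * k = γ * (1 - ε) * k * (ρ * ℓ) by ring]
    exact sqrt_mul_div_two_lt_iff (by positivity) hq hsα
  obtain rfl : G₃ = _ := funext hG₃
  rw [hcrit, ← exists_pos_add_mul_exp_sq_mul_exp_sq_eq_iff hA]
  refine ⟨Iff.rfl, fun ⟨x, hx, hfx⟩ => ⟨x, ⟨hx, hfx⟩, fun y ⟨hy, hfy⟩ => ?_⟩⟩
  exact (strictMonoOn_add_mul_exp_sq_mul_exp_sq hA).injOn hy.le hx.le (hfy.trans hfx.symm)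

/-- The equation `G₃(x) = q₀/(ρℓ√α)` determining the solid–mushy interface coefficient
`ω` for the heat-flux boundary condition has a positive solution iff
`q₀ > √(γ(1-ε)ρℓk/2)`, and in that case the positive solution is unique. -/
theorem stmt_16 (ρ c k ℓ γ q₀ α ε : ℝ)
    (hρ : 0 < ρ) (hc : 0 < c) (hk : 0 < k) (hℓ : 0 < ℓ) (hγ : 0 < γ) (hq : 0 < q₀)
    (hα : α = k / (ρ * c)) (hε0 : 0 < ε) (hε1 : ε < 1)
    (G₃ : ℝ → ℝ)
    (hG₃ : ∀ x, G₃ x = (x + (γ * (1 - ε) * k / (2 * q₀ * Real.sqrt α)) *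
      Real.exp (x ^ 2)) * Real.exp (x ^ 2)) :
    ((∃ ω > (0:ℝ), G₃ ω = q₀ / (ρ * ℓ * Real.sqrt α)) ↔
      q₀ > Real.sqrt (γ * (1 - ε) * ρ * ℓ * k / 2)) ∧
    (q₀ > Real.sqrt (γ * (1 - ε) * ρ * ℓ * k / 2) →
      ∃! ω : ℝ, ω > 0 ∧ G₃ ω = q₀ / (ρ * ℓ * Real.sqrt α)) :=
  stmt_16_general ρ c k ℓ γ q₀ α ε hρ hc hk hℓ hγ hq hα hε1 G₃ hG₃
end
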